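/- Geodesics in the log-euclidean plane are unique: for any two distinct points A, B ∈ ℂ, if γ₁ and γ₂ are both geodesics from A to B (maps [0, dLE(A,B)] → ℂ with γᵢ(0) = A, γᵢ(dLE(A,B)) = B, and dLE(γᵢ(s), γᵢ(t)) = |s − t| for all s, t), then γ₁(t) = γ₂(t) for all t ∈ [0, dLE(A,B)]. -/

import Mathlib

open Complex Set

/-- A path `γ : [0,1] → ℂ` is piecewise C¹: continuous on `[0,1]` and C¹ on the
pieces of a finite partition `0 = s 0 < s 1 < ⋯ < s n = 1`. -/
def PiecewiseC1 (γ : ℝ → ℂ) : Prop :=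
  ContinuousOn γ (Set.Icc 0 1) ∧
    ∃ (n : ℕ) (s : Fin (n + 1) → ℝ), StrictMono s ∧ s 0 = 0 ∧ s (Fin.last n) = 1 ∧
      ∀ i : Fin n, ContDiffOn ℝ 1 γ (Set.Icc (s i.castSucc) (s i.succ))

/-- The log-euclidean length of a path: the euclidean length of `t ↦ γ(t)²`. -/
noncomputable def LELength (γ : ℝ → ℂ) : ℝ :=
  ∫ t in (0:ℝ)..1, 2 * ‖γ t‖ * ‖deriv γ t‖

/-- The log-euclidean distance: infimum of log-euclidean lengths of piecewise C¹ paths. -/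
noncomputable def dLE (A B : ℂ) : ℝ :=
  sInf {L : ℝ | ∃ γ : ℝ → ℂ, PiecewiseC1 γ ∧ γ 0 = A ∧ γ 1 = B ∧ LELength γ = L}

/-- A geodesic from `A` to `B` in the log-euclidean plane. -/
def IsLEGeodesic (A B : ℂ) (γ : ℝ → ℂ) : Prop :=
  γ 0 = A ∧ γ (dLE A B) = B ∧
    ∀ s ∈ Set.Icc (0:ℝ) (dLE A B), ∀ t ∈ Set.Icc (0:ℝ) (dLE A B),
      dLE (γ s) (γ t) = |s - t|

open MeasureTheory intervalIntegral

noncomputable def Complex.abs : AbsoluteValue ℂ ℝ := NormedField.toAbsoluteValue ℂ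

lemma Complex.norm_eq_abs (z : ℂ) : ‖z‖ = Complex.abs z := rfl

lemma Complex.abs_two : Complex.abs 2 = 2 := Complex.norm_two

lemma Complex.abs_ofReal (r : ℝ) : Complex.abs (r : ℂ) = |r| := Complex.norm_real r

lemma Complex.abs_natCast (n : ℕ) : Complex.abs (n : ℂ) = n := by
  rw [← Complex.norm_eq_abs]; simp

lemma Complex.continuous_abs : Continuous Complex.abs := continuous_norm

lemma Complex.abs_re_le_abs (z : ℂ) : |z.re| ≤ Complex.abs z := Complex.abs_re_le_norm z

lemma Complex.re_le_abs (z : ℂ) : z.re ≤ Complex.abs z := Complex.re_le_norm z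

lemma exists_D {γ : ℝ → ℂ} (hγ : PiecewiseC1 γ) :
    ∃ (D : ℝ → ℂ) (C : ℝ) (J : Set ℝ), J.Finite ∧
      (∀ x ∈ Ico (0:ℝ) 1, HasDerivWithinAt γ (D x) (Ioi x) x ∧ ‖D x‖ ≤ C) ∧
      (∀ x ∈ Ioo (0:ℝ) 1, x ∉ J → D x = deriv γ x) := by
  obtain ⟨hcont, n, s, hs, h0, h1, hC⟩ := hγ
  have locate : ∀ x ∈ Ico (0:ℝ) 1, ∃ j : Fin n, s j.castSucc ≤ x ∧ x < s j.succ := by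
    intro x hx
    have hne : (Finset.univ.filter (fun i : Fin (n+1) => s i ≤ x)).Nonempty :=
      ⟨0, by simp [h0, hx.1]⟩
    set m := (Finset.univ.filter (fun i : Fin (n+1) => s i ≤ x)).max' hne with hm
    have hmx : s m ≤ x := by
      have := Finset.max'_mem _ hne
      rw [← hm] at this
      simpa using this
    have hmlast : m ≠ Fin.last n := by
      intro h
      rw [h, h1] at hmx
      exact absurd hmx (not_le.2 hx.2)
    obtain ⟨j, hj⟩ := Fin.exists_castSucc_eq.2 hmlast
    refine ⟨j, by rw [hj]; exact hmx, ?_⟩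
    by_contra hcon
    push_neg at hcon
    have hmem : j.succ ∈ Finset.univ.filter (fun i : Fin (n+1) => s i ≤ x) := by
      simp [hcon]
    have hle := Finset.le_max' _ _ hmem
    rw [← hm, ← hj] at hle
    exact absurd hle (not_le.2 (Fin.castSucc_lt_succ (i := j)))
  have key : ∀ (x : ℝ) (j : Fin n), s j.castSucc ≤ x → x < s j.succ →
      HasDerivWithinAt γ (derivWithin γ (Icc (s j.castSucc) (s j.succ)) x) (Ioi x) x := by
    intro x j hj1 hj2
    have hxI : x ∈ Icc (s j.castSucc) (s j.succ) := ⟨hj1, le_of_lt hj2⟩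
    have hdiff := ((hC j).differentiableOn one_ne_zero) x hxI
    have hIoc : Ioc x (s j.succ) ∈ nhdsWithin x (Ioi x) :=
      Ioc_mem_nhdsGT_of_mem ⟨le_rfl, hj2⟩
    have hmem : Icc (s j.castSucc) (s j.succ) ∈ nhdsWithin x (Ioi x) :=
      Filter.mem_of_superset hIoc (fun y hy => ⟨le_trans hj1 (le_of_lt hy.1), hy.2⟩)
    exact HasDerivWithinAt.mono_of_mem_nhdsWithin hdiff.hasDerivWithinAt hmem
  have hbd : ∀ j : Fin n, ∃ Cj, ∀ y ∈ Icc (s j.castSucc) (s j.succ),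
      ‖derivWithin γ (Icc (s j.castSucc) (s j.succ)) y‖ ≤ Cj := fun j =>
    isCompact_Icc.exists_bound_of_continuousOn
      ((hC j).continuousOn_derivWithin (uniqueDiffOn_Icc (hs (Fin.castSucc_lt_succ (i := j)))) le_rfl)
  choose Cf hCf using hbd
  obtain ⟨C, hCle⟩ := Finite.exists_le Cf
  refine ⟨fun x => derivWithin γ (Ioi x) x, C, Set.range s, Set.finite_range s, ?_, ?_⟩
  · intro x hx
    obtain ⟨j, hj1, hj2⟩ := locate x hx
    have h1 := key x j hj1 hj2
    have heq : derivWithin γ (Ioi x) x = derivWithin γ (Icc (s j.castSucc) (s j.succ)) x :=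
      h1.derivWithin (uniqueDiffWithinAt_Ioi x)
    constructor
    · show HasDerivWithinAt γ (derivWithin γ (Ioi x) x) (Ioi x) x
      rw [heq]; exact h1
    · show ‖derivWithin γ (Ioi x) x‖ ≤ C
      rw [heq]; exact le_trans (hCf j x ⟨hj1, hj2.le⟩) (hCle j)
  · intro x hx hxJ
    obtain ⟨j, hj1, hj2⟩ := locate x ⟨hx.1.le, hx.2⟩
    have hlt : s j.castSucc < x := lt_of_le_of_ne hj1 (fun h => hxJ ⟨j.castSucc, h⟩)
    have hnhds : Icc (s j.castSucc) (s j.succ) ∈ nhds x := Icc_mem_nhds hlt hj2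
    have hdiff := ((hC j).differentiableOn one_ne_zero) x ⟨hj1, hj2.le⟩
    have hda : HasDerivAt γ (derivWithin γ (Icc (s j.castSucc) (s j.succ)) x) x :=
      hdiff.hasDerivWithinAt.hasDerivAt hnhds
    have h3 : derivWithin γ (Ioi x) x = derivWithin γ (Icc (s j.castSucc) (s j.succ)) x :=
      (key x j hj1 hj2).derivWithin (uniqueDiffWithinAt_Ioi x)
    show derivWithin γ (Ioi x) x = deriv γ x
    rw [h3, hda.deriv]

lemma aux_int {γ : ℝ → ℂ} (hγ : PiecewiseC1 γ) {u v : ℝ} (hu : 0 ≤ u) (huv : u ≤ v) (hv : v ≤ 1)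
    (w : ℝ → ℝ) (hw : ContinuousOn w (Icc 0 1)) :
    IntervalIntegrable (fun t => w t * Complex.abs (deriv γ t)) volume u v := by
  obtain ⟨D, C, J, hJfin, hDprop, hDeq⟩ := exists_D hγ
  obtain ⟨Mw, hMw⟩ := isCompact_Icc.exists_bound_of_continuousOn hw
  have hsub : Ioc u v ⊆ Icc (0:ℝ) 1 := fun x hx => ⟨le_trans hu hx.1.le, le_trans hx.2 hv⟩
  rw [intervalIntegrable_iff_integrableOn_Ioc_of_le huv]
  have hmeas : AEStronglyMeasurable (fun t => w t * Complex.abs (deriv γ t))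
      (volume.restrict (Ioc u v)) := by
    have h1 : AEStronglyMeasurable w (volume.restrict (Ioc u v)) :=
      (hw.mono hsub).aestronglyMeasurable measurableSet_Ioc
    have h2 : Measurable (fun t => Complex.abs (deriv γ t)) :=
      Complex.continuous_abs.measurable.comp (measurable_deriv γ)
    exact h1.mul h2.aestronglyMeasurable
  have hC0 : 0 ≤ C := le_trans (norm_nonneg (D 0)) ((hDprop 0 ⟨le_rfl, one_pos⟩).2)
  have hMw0 : 0 ≤ Mw := le_trans (abs_nonneg (w 0)) (hMw 0 ⟨le_rfl, zero_le_one⟩)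
  refine Integrable.mono' (integrable_const (Mw * C)) hmeas ?_
  have hnull : volume (J ∪ {1}) = 0 := (hJfin.union (Set.finite_singleton 1)).measure_zero _
  have hae := measure_eq_zero_iff_ae_notMem.1 hnull
  rw [ae_restrict_iff' measurableSet_Ioc]
  filter_upwards [hae] with x hxn hxIoc
  have hx01 : x ∈ Icc (0:ℝ) 1 := hsub hxIoc
  have hwb : |w x| ≤ Mw := hMw x hx01
  have hx1 : x < 1 := lt_of_le_of_ne hx01.2 (fun h => hxn (Or.inr (by simp [h])))
  have hxIoo : x ∈ Ioo (0:ℝ) 1 := ⟨lt_of_le_of_lt hu hxIoc.1, hx1⟩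
  have hderivb : Complex.abs (deriv γ x) ≤ C := by
    rw [← hDeq x hxIoo (fun hJ => hxn (Or.inl hJ)), ← Complex.norm_eq_abs]
    exact (hDprop x ⟨hxIoo.1.le, hxIoo.2⟩).2
  rw [Real.norm_eq_abs, abs_mul, _root_.abs_of_nonneg (AbsoluteValue.nonneg Complex.abs (deriv γ x))]
  exact mul_le_mul hwb hderivb (AbsoluteValue.nonneg _ _) hMw0

lemma master_bound {γ : ℝ → ℂ} (hγ : PiecewiseC1 γ) {u v : ℝ} (hu : 0 ≤ u) (huv : u ≤ v)
    (hv : v ≤ 1) (F : ℝ → ℂ) (c : ℝ → ℂ)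
    (hFcont : ContinuousOn F (Icc 0 1))
    (hccont : ContinuousOn c (Icc 0 1))
    (hchain : ∀ x ∈ Ico (0:ℝ) 1, ∀ d : ℂ, HasDerivWithinAt γ d (Ioi x) x →
      HasDerivWithinAt F (c x * d) (Ioi x) x) :
    ‖F v - F u‖ ≤ ∫ t in u..v, Complex.abs (c t) * Complex.abs (deriv γ t) := by
  obtain ⟨D, C, J, hJfin, hDprop, hDeq⟩ := exists_D hγ
  set F' : ℝ → ℂ := fun x => c x * D x with hF'
  have hsub : Ioc u v ⊆ Icc (0:ℝ) 1 := fun x hx => ⟨le_trans hu hx.1.le, le_trans hx.2 hv⟩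
  have hsub2 : Ioo u v ⊆ Ico (0:ℝ) 1 := fun x hx => ⟨le_trans hu hx.1.le, lt_of_lt_of_le hx.2 hv⟩
  have hd : ∀ x ∈ Ioo u v, HasDerivWithinAt F (F' x) (Ioi x) x := fun x hx =>
    hchain x (hsub2 hx) (D x) (hDprop x (hsub2 hx)).1
  obtain ⟨Mc, hMc⟩ := isCompact_Icc.exists_bound_of_continuousOn hccont
  have hC0 : 0 ≤ C := le_trans (norm_nonneg (D 0)) ((hDprop 0 ⟨le_rfl, one_pos⟩).2)
  have hMc0 : 0 ≤ Mc := le_trans (norm_nonneg (c 0)) (hMc 0 ⟨le_rfl, zero_le_one⟩)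
  have hnull : volume (J ∪ {1}) = 0 := (hJfin.union (Set.finite_singleton 1)).measure_zero _
  have hae := measure_eq_zero_iff_ae_notMem.1 hnull
  have hDeq' : ∀ x ∈ Ioc u v, x ∉ J ∪ {1} → D x = deriv γ x := by
    intro x hxIoc hxn
    have hx1 : x < 1 := lt_of_le_of_ne (hsub hxIoc).2 (fun h => hxn (Or.inr (by simp [h])))
    exact hDeq x ⟨lt_of_le_of_lt hu hxIoc.1, hx1⟩ (fun hJ => hxn (Or.inl hJ))
  have hint : IntervalIntegrable F' volume u v := by
    rw [intervalIntegrable_iff_integrableOn_Ioc_of_le huv]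
    have hmeas : AEStronglyMeasurable F' (volume.restrict (Ioc u v)) := by
      have h1 : AEStronglyMeasurable c (volume.restrict (Ioc u v)) :=
        (hccont.mono hsub).aestronglyMeasurable measurableSet_Ioc
      have h2 : AEStronglyMeasurable (fun t => deriv γ t) (volume.restrict (Ioc u v)) :=
        (measurable_deriv γ).aestronglyMeasurable
      refine (h1.mul h2).congr ?_
      rw [Filter.EventuallyEq, ae_restrict_iff' measurableSet_Ioc]
      filter_upwards [hae] with x hxn hxIoc
      show c x * deriv γ x = F' x
      rw [hF']
      show c x * deriv γ x = c x * D x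
      rw [hDeq' x hxIoc hxn]
    refine Integrable.mono' (integrable_const (Mc * C)) hmeas ?_
    rw [ae_restrict_iff' measurableSet_Ioc]
    filter_upwards [hae] with x hxn hxIoc
    have hx1 : x < 1 := lt_of_le_of_ne (hsub hxIoc).2 (fun h => hxn (Or.inr (by simp [h])))
    have hxIco : x ∈ Ico (0:ℝ) 1 := ⟨(hsub hxIoc).1, hx1⟩
    rw [hF']
    simp only [norm_mul]
    exact mul_le_mul (hMc x (hsub hxIoc)) (hDprop x hxIco).2 (norm_nonneg _) hMc0
  have heq := integral_eq_sub_of_hasDeriv_right_of_le huv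
    (hFcont.mono (Icc_subset_Icc hu hv)) hd hint
  calc ‖F v - F u‖ = ‖∫ t in u..v, F' t‖ := by rw [heq]
    _ ≤ ∫ t in u..v, ‖F' t‖ := norm_integral_le_integral_norm huv
    _ = ∫ t in u..v, Complex.abs (c t) * Complex.abs (deriv γ t) := by
        apply intervalIntegral.integral_congr_ae
        filter_upwards [hae] with x hxn hxI
        rw [Set.uIoc_of_le huv] at hxI
        rw [hF']
        simp only [norm_mul, Complex.norm_eq_abs]
        rw [hDeq' x hxI hxn]

lemma le_length_sq {γ : ℝ → ℂ} (hγ : PiecewiseC1 γ) {u v : ℝ} (hu : 0 ≤ u) (huv : u ≤ v)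
    (hv : v ≤ 1) :
    Complex.abs (γ v ^ 2 - γ u ^ 2) ≤
      ∫ t in u..v, 2 * Complex.abs (γ t) * Complex.abs (deriv γ t) := by
  have h := master_bound hγ hu huv hv (fun t => γ t ^ 2) (fun t => 2 * γ t)
    (hγ.1.pow 2) (continuousOn_const.mul hγ.1) ?_
  · rw [← Complex.norm_eq_abs]
    refine le_trans h (le_of_eq (integral_congr ?_))
    intro x _
    simp [map_mul, Complex.abs_two, mul_assoc]
  · intro x _ d hd
    have h2 := hd.mul hd
    have hfun : (γ * γ) = fun y => γ y ^ 2 := by funext y; simp only [Pi.mul_apply]; ring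
    rw [hfun] at h2
    have e : 2 * γ x * d = d * γ x + γ x * d := by ring
    rw [e]; exact h2

lemma le_length_lin {γ : ℝ → ℂ} (hγ : PiecewiseC1 γ) {u v : ℝ} (hu : 0 ≤ u) (huv : u ≤ v)
    (hv : v ≤ 1) {m : ℝ} (hm : 0 ≤ m)
    (hmin : ∀ t ∈ Icc u v, m ≤ Complex.abs (γ t)) :
    2 * m * Complex.abs (γ v - γ u) ≤
      ∫ t in u..v, 2 * Complex.abs (γ t) * Complex.abs (deriv γ t) := by
  have h := master_bound hγ hu huv hv γ (fun _ => (1:ℂ)) hγ.1 continuousOn_const ?_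
  · have h1 : Complex.abs (γ v - γ u) ≤ ∫ t in u..v, Complex.abs (deriv γ t) := by
      rw [← Complex.norm_eq_abs]
      refine le_trans h (le_of_eq (integral_congr ?_))
      intro x _
      simp
    have hcont2 : ContinuousOn (fun t => 2 * Complex.abs (γ t)) (Icc (0:ℝ) 1) :=
      continuousOn_const.mul (Complex.continuous_abs.comp_continuousOn hγ.1)
    have hint1 : IntervalIntegrable (fun t => Complex.abs (deriv γ t)) volume u v := by
      have := aux_int hγ hu huv hv (fun _ => (1:ℝ)) continuousOn_const
      simpa using this
    have hint2 : IntervalIntegrable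
        (fun t => 2 * Complex.abs (γ t) * Complex.abs (deriv γ t)) volume u v :=
      aux_int hγ hu huv hv (fun t => 2 * Complex.abs (γ t)) hcont2
    calc 2 * m * Complex.abs (γ v - γ u) ≤ 2 * m * ∫ t in u..v, Complex.abs (deriv γ t) :=
          mul_le_mul_of_nonneg_left h1 (by positivity)
      _ = ∫ t in u..v, 2 * m * Complex.abs (deriv γ t) := by
          rw [← intervalIntegral.integral_const_mul]
      _ ≤ ∫ t in u..v, 2 * Complex.abs (γ t) * Complex.abs (deriv γ t) := by
          refine integral_mono_on huv ?_ hint2 ?_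
          · simpa [mul_assoc] using hint1.const_mul (2*m)
          · intro x hx
            have hmx := hmin x hx
            have h2 := AbsoluteValue.nonneg Complex.abs (deriv γ x)
            nlinarith
  · intro x _ d hd
    simpa using hd
lemma piecewiseC1_of_contDiffOn {γ : ℝ → ℂ} (h : ContDiffOn ℝ 1 γ (Icc 0 1)) :
    PiecewiseC1 γ := by
  refine ⟨h.continuousOn, 1, fun i => (i.val : ℝ), ?_, by simp, by simp [Fin.last], ?_⟩
  · intro i j hij
    show ((i : ℕ) : ℝ) < ((j : ℕ) : ℝ)
    have : (i : ℕ) < (j : ℕ) := hij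
    exact_mod_cast this
  · intro i
    have hi : i = 0 := Subsingleton.elim _ _
    subst hi
    simpa using h

lemma LELength_nonneg (γ : ℝ → ℂ) : 0 ≤ LELength γ :=
  intervalIntegral.integral_nonneg zero_le_one (fun u _ => by positivity)

lemma pathSet_nonempty (A B : ℂ) :
    {L : ℝ | ∃ γ : ℝ → ℂ, PiecewiseC1 γ ∧ γ 0 = A ∧ γ 1 = B ∧ LELength γ = L}.Nonempty := by
  refine ⟨_, fun t => A + (t:ℂ) * (B - A), ?_, by simp, by simp, rfl⟩
  apply piecewiseC1_of_contDiffOn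
  exact (contDiff_const.add ((Complex.ofRealCLM.contDiff).mul contDiff_const)).contDiffOn

lemma dLE_bddBelow (A B : ℂ) :
    BddBelow {L : ℝ | ∃ γ : ℝ → ℂ, PiecewiseC1 γ ∧ γ 0 = A ∧ γ 1 = B ∧ LELength γ = L} := by
  refine ⟨0, ?_⟩
  rintro L ⟨γ, hγ, h0, h1, rfl⟩
  exact LELength_nonneg γ

lemma dLE_nonneg (A B : ℂ) : 0 ≤ dLE A B := by
  refine le_csInf (pathSet_nonempty A B) ?_
  rintro L ⟨γ, hγ, h0, h1, rfl⟩
  exact LELength_nonneg γ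

lemma dLE_le {A B : ℂ} {γ : ℝ → ℂ} (hγ : PiecewiseC1 γ) (h0 : γ 0 = A) (h1 : γ 1 = B) :
    dLE A B ≤ LELength γ :=
  csInf_le (dLE_bddBelow A B) ⟨γ, hγ, h0, h1, rfl⟩

lemma dLE_ge (A B : ℂ) : Complex.abs (B ^ 2 - A ^ 2) ≤ dLE A B := by
  refine le_csInf (pathSet_nonempty A B) ?_
  rintro L ⟨γ, hγ, h0, h1, rfl⟩
  have := le_length_sq hγ le_rfl zero_le_one le_rfl
  rw [h0, h1] at this
  exact this

lemma integral_two_sub_two : (∫ t in (0:ℝ)..1, (2 - 2 * t)) = 1 := by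
  have hs : (∫ t in (0:ℝ)..1, (2 - 2 * t))
      = (∫ t in (0:ℝ)..1, (2:ℝ)) - ∫ t in (0:ℝ)..1, 2 * t := by
    apply intervalIntegral.integral_sub intervalIntegrable_const
    exact (continuous_const.mul continuous_id).intervalIntegrable 0 1
  have h2 : (∫ t in (0:ℝ)..1, 2 * t) = 1 := by
    rw [intervalIntegral.integral_const_mul]
    simp [integral_id]
  rw [hs, h2]
  norm_num

lemma dLE_zero_right (X : ℂ) : dLE X 0 = Complex.abs X ^ 2 := by
  apply le_antisymm
  · set γ : ℝ → ℂ := fun t => X - (t:ℂ) * X with hγdef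
    have hder : ∀ t : ℝ, HasDerivAt γ (-X) t := by
      intro t
      have h1 : HasDerivAt (fun t : ℝ => (t:ℂ)) 1 t := Complex.ofRealCLM.hasDerivAt
      have h2 := (h1.mul_const X).const_sub X
      simpa using h2
    have hpc : PiecewiseC1 γ := by
      apply piecewiseC1_of_contDiffOn
      exact (contDiff_const.sub ((Complex.ofRealCLM.contDiff).mul contDiff_const)).contDiffOn
    have hL : LELength γ = Complex.abs X ^ 2 := by
      rw [LELength]
      rw [integral_congr (g := fun t => (2 - 2*t) * Complex.abs X ^ 2) ?_]
      · rw [intervalIntegral.integral_mul_const, integral_two_sub_two, one_mul]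
      · intro t ht
        rw [Set.uIcc_of_le zero_le_one] at ht
        show 2 * Complex.abs (γ t) * Complex.abs (deriv γ t) = (2 - 2 * t) * Complex.abs X ^ 2

        have habs : Complex.abs (γ t) = (1 - t) * Complex.abs X := by
          have : γ t = ((1 - t : ℝ) : ℂ) * X := by
            rw [hγdef]; push_cast; ring
          rw [this, map_mul, Complex.abs_ofReal, _root_.abs_of_nonneg (by linarith [ht.2])]
        rw [(hder t).deriv, habs, map_neg_eq_map]
        ring
    rw [← hL]
    exact dLE_le hpc (by simp [hγdef]) (by simp [hγdef])
  · have := dLE_ge X 0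
    simpa [map_pow] using this

lemma dLE_zero_left (X : ℂ) : dLE 0 X = Complex.abs X ^ 2 := by
  apply le_antisymm
  · set γ : ℝ → ℂ := fun t => (t:ℂ) * X with hγdef
    have hder : ∀ t : ℝ, HasDerivAt γ X t := by
      intro t
      have h1 : HasDerivAt (fun t : ℝ => (t:ℂ)) 1 t := Complex.ofRealCLM.hasDerivAt
      simpa using h1.mul_const X
    have hpc : PiecewiseC1 γ := by
      apply piecewiseC1_of_contDiffOn
      exact ((Complex.ofRealCLM.contDiff).mul contDiff_const).contDiffOn
    have hL : LELength γ = Complex.abs X ^ 2 := by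
      rw [LELength]
      rw [integral_congr (g := fun t => 2 * t * Complex.abs X ^ 2) ?_]
      · rw [intervalIntegral.integral_mul_const, intervalIntegral.integral_const_mul]
        simp [integral_id]
      · intro t ht
        rw [Set.uIcc_of_le zero_le_one] at ht
        show 2 * Complex.abs (γ t) * Complex.abs (deriv γ t) = 2 * t * Complex.abs X ^ 2
        have habs : Complex.abs (γ t) = t * Complex.abs X := by
          rw [hγdef]
          simp only []
          rw [map_mul, Complex.abs_ofReal, _root_.abs_of_nonneg ht.1]
        rw [(hder t).deriv, habs]
        ring
    rw [← hL]
    exact dLE_le hpc (by simp [hγdef]) (by simp [hγdef])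
  · have := dLE_ge 0 X
    simpa [map_pow] using this

lemma dLE_lower_min (X w : ℂ) :
    min (3/4 * Complex.abs w ^ 2) (Complex.abs w * Complex.abs (X - w)) ≤ dLE X w := by
  refine le_csInf (pathSet_nonempty X w) ?_
  rintro L ⟨γ, hγ, h0, h1, rfl⟩
  obtain ⟨t₀, ht₀, hmin⟩ := isCompact_Icc.exists_isMinOn (nonempty_Icc.2 zero_le_one)
    (Complex.continuous_abs.comp_continuousOn hγ.1)
  set m := Complex.abs (γ t₀) with hm
  have hm0 : 0 ≤ m := AbsoluteValue.nonneg _ _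
  have hminle : ∀ t ∈ Icc (0:ℝ) 1, m ≤ Complex.abs (γ t) := fun t ht =>
    isMinOn_iff.1 hmin t ht
  have int1 : IntervalIntegrable
      (fun t => 2 * Complex.abs (γ t) * Complex.abs (deriv γ t)) volume 0 t₀ :=
    aux_int hγ le_rfl ht₀.1 ht₀.2 _
      (continuousOn_const.mul (Complex.continuous_abs.comp_continuousOn hγ.1))
  have int2 : IntervalIntegrable
      (fun t => 2 * Complex.abs (γ t) * Complex.abs (deriv γ t)) volume t₀ 1 :=
    aux_int hγ ht₀.1 ht₀.2 le_rfl _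
      (continuousOn_const.mul (Complex.continuous_abs.comp_continuousOn hγ.1))
  have hsplit : LELength γ
      = (∫ t in (0:ℝ)..t₀, 2 * Complex.abs (γ t) * Complex.abs (deriv γ t))
        + ∫ t in t₀..(1:ℝ), 2 * Complex.abs (γ t) * Complex.abs (deriv γ t) :=
    (integral_add_adjacent_intervals int1 int2).symm
  have hpart1 : (0:ℝ) ≤ ∫ t in (0:ℝ)..t₀, 2 * Complex.abs (γ t) * Complex.abs (deriv γ t) :=
    intervalIntegral.integral_nonneg ht₀.1 (fun u _ => by positivity)
  have hpart2 := le_length_sq hγ ht₀.1 ht₀.2 le_rfl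
  by_cases hcase : m ≤ Complex.abs w / 2
  · refine le_trans (min_le_left _ _) ?_
    have k2 : m ^ 2 ≤ Complex.abs w ^ 2 / 4 := by nlinarith
    have k3 := hpart2
    rw [h1] at k3
    have k4 : Complex.abs (w ^ 2 - γ t₀ ^ 2) ≤
        ∫ t in t₀..(1:ℝ), 2 * Complex.abs (γ t) * Complex.abs (deriv γ t) := k3
    have k5 : Complex.abs w ^ 2 - m ^ 2 ≤ Complex.abs (w ^ 2 - γ t₀ ^ 2) := by
      have := norm_sub_norm_le (w ^ 2) (γ t₀ ^ 2)
      simp only [Complex.norm_eq_abs, map_pow] at this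
      linarith
    rw [hsplit]
    linarith
  · push_neg at hcase
    refine le_trans (min_le_right _ _) ?_
    have hmin' : ∀ t ∈ Icc (0:ℝ) 1, Complex.abs w / 2 ≤ Complex.abs (γ t) := fun t ht =>
      le_trans hcase.le (hminle t ht)
    have := le_length_lin hγ le_rfl zero_le_one le_rfl (by positivity) hmin'
    rw [h0, h1] at this
    calc Complex.abs w * Complex.abs (X - w)
        = 2 * (Complex.abs w / 2) * Complex.abs (w - X) := by
          rw [AbsoluteValue.map_sub Complex.abs X w]
          ring
      _ ≤ LELength γ := this
lemma sameRay_decomp {u v : ℂ} (h : ‖u + v‖ = ‖u‖ + ‖v‖) (hsum : u + v ≠ 0) :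
    v = (‖v‖ / ‖u + v‖ : ℝ) • (u + v) := by
  have hs : SameRay ℝ u v := sameRay_iff_norm_add.2 h
  rcases hs with h0 | h0 | ⟨r₁, r₂, hr₁, hr₂, hr⟩
  · subst h0
    rw [zero_add] at hsum ⊢
    rw [div_self (norm_ne_zero_iff.2 hsum), one_smul]
  · subst h0
    simp
  · have hv : v ≠ 0 := by
      rintro rfl
      apply hsum
      rw [add_zero]
      have h1 : r₁ • u = 0 := by simpa using hr
      rcases smul_eq_zero.1 h1 with h' | h'
      · exact absurd h' (ne_of_gt hr₁)
      · exact h'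
    have hvn : (0:ℝ) < ‖v‖ := norm_pos_iff.2 hv
    have hu : u = (r₁⁻¹ * r₂) • v := by
      rw [mul_smul, ← hr, smul_smul, inv_mul_cancel₀ (ne_of_gt hr₁), one_smul]
    set k : ℝ := r₁⁻¹ * r₂ + 1 with hk
    have hkpos : 0 < k := by positivity
    have huv : u + v = k • v := by rw [hu, hk, add_smul, one_smul]
    rw [huv, norm_smul, Real.norm_eq_abs, abs_of_pos hkpos, smul_smul]
    have hco : ‖v‖ / (k * ‖v‖) * k = 1 := by
      rw [div_mul_eq_mul_div, mul_comm]
      exact div_self (by positivity)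
    rw [hco, one_smul]

lemma eq_of_norm_add_eq {x y : ℂ} (h : ‖x + y‖ = ‖x‖ + ‖y‖) (hn : ‖x‖ = ‖y‖)
    (hx : x ≠ 0) : x = y := by
  have hsum : x + y ≠ 0 := by
    intro h0
    rw [h0, norm_zero] at h
    have h1 : ‖x‖ = 0 := by
      have := norm_nonneg x; have := norm_nonneg y; linarith
    exact hx (norm_eq_zero.1 h1)
  have h2 := sameRay_decomp (u := x) (v := y) h hsum
  have h3 := sameRay_decomp (u := y) (v := x)
    (by rw [add_comm, h, hn, add_comm (‖y‖)]) (by rwa [add_comm])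
  rw [hn, add_comm y x] at h3
  exact h3.trans h2.symm

lemma sqrt_unique_on {f g : ℝ → ℂ} {a b c : ℝ} (hc : c ∈ Icc a b)
    (hf : ContinuousOn f (Icc a b)) (hg : ContinuousOn g (Icc a b))
    (hsq : ∀ t ∈ Icc a b, f t ^ 2 = g t ^ 2) (hnz : ∀ t ∈ Icc a b, g t ≠ 0)
    (hanchor : f c = g c) : ∀ t ∈ Icc a b, f t = g t := by
  set q : ℝ → ℂ := fun t => f t / g t with hq
  have hcont : ContinuousOn q (Icc a b) := hf.div hg hnz
  have hval : ∀ t ∈ Icc a b, q t = 1 ∨ q t = -1 := by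
    intro t ht
    have hsq1 : q t ^ 2 = 1 := by
      simp only [hq, div_pow, hsq t ht]
      exact div_self (pow_ne_zero 2 (hnz t ht))
    have hfac : (q t - 1) * (q t + 1) = 0 := by linear_combination hsq1
    rcases mul_eq_zero.1 hfac with h1 | h1
    · exact Or.inl (by linear_combination h1)
    · exact Or.inr (by linear_combination h1)
  have hpre : IsPreconnected (q '' Icc a b) := isPreconnected_Icc.image _ hcont
  have hdisj : Disjoint (Metric.ball (1:ℂ) 1) (Metric.ball (-1:ℂ) 1) := by
    rw [Set.disjoint_left]
    intro z hz1 hz2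
    rw [Metric.mem_ball] at hz1 hz2
    have : (2:ℝ) = dist (1:ℂ) (-1:ℂ) := by
      simp [Complex.dist_eq]
      norm_num
    have htri := dist_triangle (1:ℂ) z (-1:ℂ)
    rw [dist_comm (1:ℂ) z] at htri
    linarith
  have hsub : q '' Icc a b ⊆ Metric.ball (1:ℂ) 1 ∪ Metric.ball (-1:ℂ) 1 := by
    rintro z ⟨t, ht, rfl⟩
    rcases hval t ht with h1 | h1 <;> rw [h1]
    · exact Or.inl (by simp)
    · exact Or.inr (by simp)
  have hin : (q '' Icc a b ∩ Metric.ball (1:ℂ) 1).Nonempty := by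
    refine ⟨q c, mem_image_of_mem _ hc, ?_⟩
    have hqc : q c = 1 := by
      simp only [hq]
      rw [hanchor]
      exact div_self (hnz c hc)
    rw [hqc]; simp
  have hres := IsPreconnected.subset_left_of_subset_union
    Metric.isOpen_ball Metric.isOpen_ball hdisj hsub hin hpre
  intro t ht
  have hmem := hres (mem_image_of_mem q ht)
  have h1 : q t = 1 := by
    rcases hval t ht with h1 | h1
    · exact h1
    · exfalso
      rw [h1, Metric.mem_ball] at hmem
      have hd : dist (-1:ℂ) 1 = 2 := by
        rw [Complex.dist_eq]
        norm_num
      linarith [hmem, hd]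
  exact (div_eq_one_iff_eq (hnz t ht)).1 h1

lemma sq_g {z : ℂ} (hz : z ≠ 0) : (Complex.exp (Complex.log z / 2)) ^ 2 = z := by
  rw [← Complex.exp_nat_mul]
  rw [show ((2:ℕ):ℂ) * (Complex.log z / 2) = Complex.log z by push_cast; ring]
  exact Complex.exp_log hz

lemma re_g_nonneg (z : ℂ) : 0 ≤ (Complex.exp (Complex.log z / 2)).re := by
  rw [Complex.exp_re]
  apply mul_nonneg (Real.exp_pos _).le
  apply Real.cos_nonneg_of_mem_Icc
  have him : (Complex.log z / 2).im = z.arg / 2 := by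
    simp [Complex.div_im, Complex.log_im]
  rw [him]
  have := Complex.abs_arg_le_pi z
  rw [abs_le] at this
  constructor <;> [linarith [this.1]; linarith [this.2]]

lemma g_sub_one {z : ℂ} (hz : z ≠ 0) :
    Complex.abs (Complex.exp (Complex.log z / 2) - 1) ≤ Complex.abs (z - 1) := by
  set g := Complex.exp (Complex.log z / 2) with hg
  have hfac : (g - 1) * (g + 1) = z - 1 := by
    have := sq_g hz
    linear_combination this
  have h3 : 1 ≤ Complex.abs (g + 1) := by
    have h4 : (1:ℝ) ≤ (g + 1).re := by
      rw [Complex.add_re, Complex.one_re]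
      linarith [re_g_nonneg z]
    exact le_trans h4 (Complex.re_le_abs _)
  calc Complex.abs (g - 1) = Complex.abs (g - 1) * 1 := (mul_one _).symm
    _ ≤ Complex.abs (g - 1) * Complex.abs (g + 1) :=
        mul_le_mul_of_nonneg_left h3 (AbsoluteValue.nonneg _ _)
    _ = Complex.abs ((g - 1) * (g + 1)) := (map_mul _ _ _).symm
    _ = Complex.abs (z - 1) := by rw [hfac]

lemma sqrt_branch (W Q : ℂ) (hW : W ≠ 0) (hQ : Complex.abs (Q - W ^ 2) < Complex.abs W ^ 2) :
    ∃ W' : ℂ, W' ^ 2 = Q ∧ Complex.abs (W' - W) ≤ Complex.abs (Q - W ^ 2) / Complex.abs W ∧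
      dLE W W' ≤ Complex.abs (Q - W ^ 2) := by
  have hW2 : W ^ 2 ≠ 0 := pow_ne_zero _ hW
  have habsW : (0:ℝ) < Complex.abs W := AbsoluteValue.pos _ hW
  set c : ℂ := Q / W ^ 2 - 1 with hc
  have habsc : Complex.abs c = Complex.abs (Q - W ^ 2) / Complex.abs W ^ 2 := by
    rw [hc, show Q / W ^ 2 - 1 = (Q - W ^ 2) / W ^ 2 by field_simp, map_div₀, map_pow]
  have hc1 : Complex.abs c < 1 := by
    rw [habsc, div_lt_one (by positivity)]
    exact hQ
  set z : ℝ → ℂ := fun t => 1 + (t : ℂ) * c with hzdef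
  have hzre : ∀ t ∈ Icc (0:ℝ) 1, z t ∈ Complex.slitPlane := by
    intro t ht
    rw [Complex.mem_slitPlane_iff]
    left
    have habs : Complex.abs ((t:ℂ) * c) < 1 := by
      rw [map_mul, Complex.abs_ofReal, _root_.abs_of_nonneg ht.1]
      calc t * Complex.abs c ≤ 1 * Complex.abs c :=
            mul_le_mul_of_nonneg_right ht.2 (AbsoluteValue.nonneg _ _)
        _ < 1 := by rw [one_mul]; exact hc1
    have hre : ((t:ℂ) * c).re ≥ -Complex.abs ((t:ℂ) * c) := by
      have := Complex.abs_re_le_abs ((t:ℂ) * c)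
      rw [abs_le] at this
      linarith [this.1]
    have : (z t).re = 1 + ((t:ℂ) * c).re := by
      rw [hzdef]
      simp [Complex.add_re]
    rw [this]
    linarith
  have hznz : ∀ t ∈ Icc (0:ℝ) 1, z t ≠ 0 := fun t ht => Complex.slitPlane_ne_zero (hzre t ht)
  set σ : ℝ → ℂ := fun t => W * Complex.exp (Complex.log (z t) / 2) with hσdef
  have hzder : ∀ t : ℝ, HasDerivAt z c t := by
    intro t
    have h1 : HasDerivAt (fun t : ℝ => (t:ℂ)) 1 t := Complex.ofRealCLM.hasDerivAt
    have := (h1.mul_const c).const_add 1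
    rw [hzdef]; simpa using this
  have hσder : ∀ t ∈ Icc (0:ℝ) 1, HasDerivAt σ (σ t * c / (2 * z t)) t := by
    intro t ht
    have hlog : HasDerivAt Complex.log (z t)⁻¹ (z t) := Complex.hasDerivAt_log (hzre t ht)
    have hcomp : HasDerivAt (fun u : ℝ => Complex.log (z u)) ((z t)⁻¹ * c) t :=
      HasDerivAt.comp t hlog (hzder t)
    have hexp := (hcomp.div_const 2).cexp
    have hfin := hexp.const_mul W
    have heq : σ t * c / (2 * z t) = W * (Complex.exp (Complex.log (z t) / 2) * ((z t)⁻¹ * c / 2)) := by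
      simp only [hσdef]; ring
    rw [heq]; exact hfin
  have hz0 : z 0 = 1 := by rw [hzdef]; simp
  have hσ0 : σ 0 = W := by rw [hσdef]; simp [hz0, Complex.log_one]
  have hsqt : ∀ t ∈ Icc (0:ℝ) 1, (σ t) ^ 2 = W ^ 2 * z t := by
    intro t ht
    rw [hσdef]
    simp only []
    rw [mul_pow, sq_g (hznz t ht)]
  have hW'sq : (σ 1) ^ 2 = Q := by
    rw [hsqt 1 ⟨zero_le_one, le_rfl⟩, hzdef]
    simp only [Complex.ofReal_one, one_mul]
    rw [hc]
    field_simp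
    ring
  have hdist : Complex.abs (σ 1 - W) ≤ Complex.abs (Q - W ^ 2) / Complex.abs W := by
    have hrw : σ 1 - W = W * (Complex.exp (Complex.log (z 1) / 2) - 1) := by
      rw [hσdef]; ring
    rw [hrw, map_mul]
    have h1 := g_sub_one (hznz 1 ⟨zero_le_one, le_rfl⟩)
    have hz1 : z 1 - 1 = c := by rw [hzdef]; simp
    rw [hz1] at h1
    calc Complex.abs W * Complex.abs (Complex.exp (Complex.log (z 1) / 2) - 1)
        ≤ Complex.abs W * Complex.abs c :=
          mul_le_mul_of_nonneg_left h1 (AbsoluteValue.nonneg _ _)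
      _ = Complex.abs (Q - W ^ 2) / Complex.abs W := by
          rw [habsc]
          field_simp
  have hpc : PiecewiseC1 σ := by
    apply piecewiseC1_of_contDiffOn
    intro t ht
    apply ContDiffAt.contDiffWithinAt
    have hzcd : ContDiff ℝ 1 z := by
      rw [hzdef]
      exact contDiff_const.add ((Complex.ofRealCLM.contDiff).mul contDiff_const)
    have hlog : ContDiffAt ℂ 1 Complex.log (z t) := Complex.contDiffAt_log (hzre t ht)
    have h1 : ContDiffAt ℝ 1 (fun u : ℝ => Complex.log (z u)) t :=
      (hlog.restrict_scalars ℝ).comp t hzcd.contDiffAt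
    exact contDiffAt_const.mul ((h1.div_const 2).cexp)
  have hlen : LELength σ = Complex.abs (Q - W ^ 2) := by
    rw [LELength]
    rw [integral_congr (g := fun _ => Complex.abs (Q - W ^ 2)) ?_]
    · simp
    · intro t ht
      rw [Set.uIcc_of_le zero_le_one] at ht
      show 2 * Complex.abs (σ t) * Complex.abs (deriv σ t) = Complex.abs (Q - W ^ 2)
      rw [(hσder t ht).deriv]
      have habsσ : Complex.abs (σ t) ^ 2 = Complex.abs W ^ 2 * Complex.abs (z t) := by
        rw [← map_pow, hsqt t ht, map_mul, map_pow]
      have hzp : (0:ℝ) < Complex.abs (z t) := AbsoluteValue.pos _ (hznz t ht)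
      have hstep : Complex.abs (σ t * c / (2 * z t))
          = Complex.abs (σ t) * Complex.abs c / (2 * Complex.abs (z t)) := by
        rw [map_div₀]
        rw [show Complex.abs (2 * z t) = 2 * Complex.abs (z t) from by
          rw [map_mul, Complex.abs_two]]
        rw [map_mul]
      rw [hstep]
      have hcalc : 2 * Complex.abs (σ t) *
          (Complex.abs (σ t) * Complex.abs c / (2 * Complex.abs (z t)))
          = Complex.abs (σ t) ^ 2 * Complex.abs c / Complex.abs (z t) := by
        field_simp
      rw [hcalc, habsσ, habsc]
      field_simp
  refine ⟨σ 1, hW'sq, hdist, ?_⟩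
  rw [← hlen]
  exact dLE_le hpc hσ0 rfl

lemma dLE_le_of_close {X Y : ℂ} (hX : X ≠ 0)
    (hclose : Complex.abs (Y - X) < Complex.abs X / 4) :
    dLE X Y ≤ Complex.abs (Y ^ 2 - X ^ 2) := by
  have habsX : (0:ℝ) < Complex.abs X := AbsoluteValue.pos _ hX
  have hYle : Complex.abs Y ≤ Complex.abs X + Complex.abs X / 4 := by
    calc Complex.abs Y = Complex.abs (X + (Y - X)) := by ring_nf
      _ ≤ Complex.abs X + Complex.abs (Y - X) := AbsoluteValue.add_le _ _ _
      _ ≤ _ := by linarith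
  have hQ : Complex.abs (Y ^ 2 - X ^ 2) < Complex.abs X ^ 2 := by
    have hfac : Y ^ 2 - X ^ 2 = (Y - X) * (Y + X) := by ring
    rw [hfac, map_mul]
    have h1 : Complex.abs (Y + X) ≤ Complex.abs Y + Complex.abs X := AbsoluteValue.add_le _ _ _
    have h2 : Complex.abs (Y + X) ≤ 9 * Complex.abs X / 4 := by linarith
    calc Complex.abs (Y - X) * Complex.abs (Y + X)
        ≤ Complex.abs (Y - X) * (9 * Complex.abs X / 4) :=
          mul_le_mul_of_nonneg_left h2 (AbsoluteValue.nonneg _ _)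
      _ < (Complex.abs X / 4) * (9 * Complex.abs X / 4) := by
          apply mul_lt_mul_of_pos_right hclose
          positivity
      _ < Complex.abs X ^ 2 := by nlinarith
  obtain ⟨W', hW'sq, hW'dist, hW'dLE⟩ := sqrt_branch X (Y ^ 2) hX hQ
  have hWY : W' = Y := by
    rcases sq_eq_sq_iff_eq_or_eq_neg.1 hW'sq with h | h
    · exact h
    · exfalso
      have h1 := hW'dist
      have habs2X : Complex.abs (2 * X) = 2 * Complex.abs X := by
        rw [map_mul, Complex.abs_two]
      have t1 : Complex.abs (2 * X) ≤ Complex.abs (Y + X) + Complex.abs (X - Y) := by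
        have hh : (2:ℂ) * X = (Y + X) + (X - Y) := by ring
        rw [hh]
        exact AbsoluteValue.add_le _ _ _
      have t2 : Complex.abs (X - Y) = Complex.abs (Y - X) := AbsoluteValue.map_sub _ _ _
      have t3 : 2 * Complex.abs X - Complex.abs X / 4 ≤ Complex.abs (Y + X) := by
        rw [habs2X, t2] at t1
        linarith
      have t4 : Complex.abs (W' - X) = Complex.abs (Y + X) := by
        rw [h, show -Y - X = -(Y + X) by ring, map_neg_eq_map]
      have h2 : Complex.abs (Y ^ 2 - X ^ 2) / Complex.abs X < Complex.abs X := by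
        rw [div_lt_iff₀ habsX]
        calc Complex.abs (Y ^ 2 - X ^ 2) < Complex.abs X ^ 2 := hQ
          _ = Complex.abs X * Complex.abs X := by ring
      rw [t4] at h1
      linarith
  rw [hWY] at hW'dLE
  exact hW'dLE
lemma geo_cont {A B : ℂ} {γ : ℝ → ℂ} (h : IsLEGeodesic A B γ) :
    ContinuousOn γ (Icc 0 (dLE A B)) := by
  intro t ht
  by_cases hzero : γ t = 0
  · rw [Metric.continuousWithinAt_iff]
    intro ε hε
    refine ⟨ε ^ 2, by positivity, ?_⟩
    intro s hs hd
    have hds := h.2.2 s hs t ht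
    rw [hzero] at hds
    have hval : Complex.abs (γ s) ^ 2 = |s - t| := by
      rw [← dLE_zero_right (γ s), hds]
    rw [Real.dist_eq] at hd
    rw [Complex.dist_eq, hzero, sub_zero]
    rw [Complex.norm_eq_abs]
    nlinarith [AbsoluteValue.nonneg Complex.abs (γ s), hval, hd, hε]
  · rw [Metric.continuousWithinAt_iff]
    intro ε hε
    have hw : (0:ℝ) < Complex.abs (γ t) := AbsoluteValue.pos _ hzero
    refine ⟨min (3 / 4 * Complex.abs (γ t) ^ 2) (Complex.abs (γ t) * ε), ?_, ?_⟩
    · exact lt_min (by positivity) (by positivity)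
    · intro s hs hd
      have hds := h.2.2 s hs t ht
      have hlow := dLE_lower_min (γ s) (γ t)
      rw [hds] at hlow
      rw [Real.dist_eq] at hd
      have h1 : ¬ (3 / 4 * Complex.abs (γ t) ^ 2 ≤ |s - t|) := by
        intro hcon
        have := lt_min_iff.1 hd
        linarith [this.1]
      have h2 : Complex.abs (γ t) * Complex.abs (γ s - γ t) ≤ |s - t| := by
        rcases min_le_iff.1 hlow with hcase | hcase
        · exact absurd hcase h1
        · exact hcase
      have h3 : |s - t| < Complex.abs (γ t) * ε := lt_of_lt_of_le hd (min_le_right _ _)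
      rw [Complex.dist_eq]
      exact (mul_lt_mul_iff_right₀ hw).1 (lt_of_le_of_lt h2 h3)

lemma geo_zero_time {A B : ℂ} {γ : ℝ → ℂ} (h : IsLEGeodesic A B γ) {t : ℝ}
    (ht : t ∈ Icc (0:ℝ) (dLE A B)) (hz : γ t = 0) : t = Complex.abs A ^ 2 := by
  have h0 : (0:ℝ) ∈ Icc (0:ℝ) (dLE A B) := ⟨le_rfl, dLE_nonneg A B⟩
  have hds := h.2.2 0 h0 t ht
  rw [h.1, hz, dLE_zero_right] at hds
  rw [zero_sub, abs_neg, _root_.abs_of_nonneg ht.1] at hds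
  exact hds.symm

lemma vertex_left {A B : ℂ} {γ : ℝ → ℂ} (h : IsLEGeodesic A B γ) {t₀ : ℝ}
    (ht₀ : t₀ ∈ Icc (0:ℝ) (dLE A B)) (hz : γ t₀ = 0) {t : ℝ} (ht : t ∈ Icc 0 t₀) :
    (γ t) ^ 2 = ((t₀ - t) / t₀ : ℝ) • (A ^ 2) := by
  rcases eq_or_lt_of_le ht₀.1 with h00 | ht₀pos
  · have ht0 : t = 0 := le_antisymm (by rw [← h00] at ht; exact ht.2) ht.1
    rw [← h00] at hz
    have hA0 : A = 0 := by rw [← h.1, hz]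
    rw [ht0, hz, hA0]
    simp
  · have htmem : t ∈ Icc (0:ℝ) (dLE A B) := ⟨ht.1, le_trans ht.2 ht₀.2⟩
    have e1 : dLE (γ t) (γ t₀) = t₀ - t := by
      rw [h.2.2 t htmem t₀ ht₀, abs_sub_comm, _root_.abs_of_nonneg (by linarith [ht.2])]
    have e2 : Complex.abs (γ t) ^ 2 = t₀ - t := by
      have hh := dLE_zero_right (γ t)
      rw [show (0:ℂ) = γ t₀ from hz.symm, e1] at hh
      exact hh.symm
    have e3 : Complex.abs ((γ t) ^ 2 - A ^ 2) ≤ t := by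
      have hg := h.2.2 0 ⟨le_rfl, dLE_nonneg A B⟩ t htmem
      rw [h.1] at hg
      have hge := dLE_ge A (γ t)
      rw [hg] at hge
      rwa [zero_sub, abs_neg, _root_.abs_of_nonneg ht.1] at hge
    have e4 : t₀ = Complex.abs A ^ 2 := geo_zero_time h ht₀ hz
    have hAne : A ^ 2 ≠ 0 := by
      intro h0
      have : t₀ = 0 := by rw [e4, ← map_pow, h0, map_zero]
      linarith
    set p := (γ t) ^ 2 with hp
    have hnp : ‖p‖ = t₀ - t := by rw [hp, Complex.norm_eq_abs, map_pow]; exact e2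
    have hup : ‖A ^ 2 - p‖ ≤ t := by
      rw [Complex.norm_eq_abs, AbsoluteValue.map_sub]
      exact e3
    have hsumeq : (A ^ 2 - p) + p = A ^ 2 := by ring
    have hnA : ‖A ^ 2‖ = t₀ := by rw [Complex.norm_eq_abs, map_pow, ← e4]
    have htri : ‖(A ^ 2 - p) + p‖ = ‖A ^ 2 - p‖ + ‖p‖ := by
      have h5 := norm_add_le (A ^ 2 - p) p
      rw [hsumeq, hnA] at h5 ⊢
      rw [hnp]
      rw [hnp] at h5
      linarith
    have hdec := sameRay_decomp htri (by rw [hsumeq]; exact hAne)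
    rw [hsumeq] at hdec
    rw [hnp, hnA] at hdec
    exact hdec

lemma vertex_right {A B : ℂ} {γ : ℝ → ℂ} (h : IsLEGeodesic A B γ) {t₀ : ℝ}
    (ht₀ : t₀ ∈ Icc (0:ℝ) (dLE A B)) (hz : γ t₀ = 0) {t : ℝ}
    (ht : t ∈ Icc t₀ (dLE A B)) :
    (γ t) ^ 2 = ((t - t₀) / (dLE A B - t₀) : ℝ) • (B ^ 2) := by
  have hdmem : dLE A B ∈ Icc (0:ℝ) (dLE A B) := ⟨dLE_nonneg A B, le_rfl⟩
  have e5 : dLE A B - t₀ = Complex.abs B ^ 2 := by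
    have hds := h.2.2 t₀ ht₀ (dLE A B) hdmem
    rw [hz, h.2.1, dLE_zero_left, abs_sub_comm,
      _root_.abs_of_nonneg (by linarith [ht₀.2])] at hds
    exact hds.symm
  rcases eq_or_lt_of_le ht₀.2 with h00 | hlt
  · have ht0 : t = t₀ := le_antisymm (by rw [h00]; exact ht.2) ht.1
    have hB0 : B ^ 2 = 0 := by
      have : Complex.abs B ^ 2 = 0 := by rw [← e5, ← h00]; ring
      rw [← map_pow] at this
      exact (AbsoluteValue.eq_zero _).1 this
    rw [ht0, hz, hB0]
    simp
  · have htmem : t ∈ Icc (0:ℝ) (dLE A B) := ⟨le_trans ht₀.1 ht.1, ht.2⟩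
    have e1 : dLE (γ t) (γ t₀) = t - t₀ := by
      rw [h.2.2 t htmem t₀ ht₀, _root_.abs_of_nonneg (by linarith [ht.1])]
    have e2 : Complex.abs (γ t) ^ 2 = t - t₀ := by
      have hh := dLE_zero_right (γ t)
      rw [show (0:ℂ) = γ t₀ from hz.symm, e1] at hh
      exact hh.symm
    have e3 : Complex.abs (B ^ 2 - (γ t) ^ 2) ≤ dLE A B - t := by
      have hg := h.2.2 t htmem (dLE A B) hdmem
      rw [h.2.1] at hg
      have hge := dLE_ge (γ t) B
      rw [hg] at hge
      rwa [abs_sub_comm, _root_.abs_of_nonneg (by linarith [ht.2])] at hge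
    have hBne : B ^ 2 ≠ 0 := by
      intro h0
      have : Complex.abs B ^ 2 = 0 := by rw [← map_pow, h0, map_zero]
      linarith [e5, this, hlt]
    set p := (γ t) ^ 2 with hp
    have hnp : ‖p‖ = t - t₀ := by rw [hp, Complex.norm_eq_abs, map_pow]; exact e2
    have hup : ‖B ^ 2 - p‖ ≤ dLE A B - t := by
      rw [Complex.norm_eq_abs]
      exact e3
    have hsumeq : (B ^ 2 - p) + p = B ^ 2 := by ring
    have hnB : ‖B ^ 2‖ = dLE A B - t₀ := by rw [Complex.norm_eq_abs, map_pow, ← e5]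
    have htri : ‖(B ^ 2 - p) + p‖ = ‖B ^ 2 - p‖ + ‖p‖ := by
      have h5 := norm_add_le (B ^ 2 - p) p
      rw [hsumeq, hnB] at h5 ⊢
      rw [hnp]
      rw [hnp] at h5
      linarith
    have hdec := sameRay_decomp htri (by rw [hsumeq]; exact hBne)
    rw [hsumeq] at hdec
    rw [hnp, hnB] at hdec
    exact hdec

lemma novertex {A B : ℂ} {γ : ℝ → ℂ} (h : IsLEGeodesic A B γ) (hd : dLE A B ≠ 0)
    (hnz : ∀ t ∈ Icc (0:ℝ) (dLE A B), γ t ≠ 0) :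
    (Complex.abs (B ^ 2 - A ^ 2) = dLE A B) ∧ ∀ t ∈ Icc (0:ℝ) (dLE A B),
      (γ t) ^ 2 = A ^ 2 + ((t / dLE A B : ℝ) : ℝ) • (B ^ 2 - A ^ 2) := by
  have hd0 : 0 < dLE A B := lt_of_le_of_ne (dLE_nonneg A B) (Ne.symm hd)
  have hcont : ContinuousOn γ (Icc 0 (dLE A B)) := geo_cont h
  obtain ⟨t₀, ht₀, hminOn⟩ := isCompact_Icc.exists_isMinOn (nonempty_Icc.2 hd0.le)
    (Complex.continuous_abs.comp_continuousOn hcont)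
  have hρ : 0 < Complex.abs (γ t₀) := AbsoluteValue.pos _ (hnz t₀ ht₀)
  set ρ := Complex.abs (γ t₀) with hρdef
  have hmin : ∀ u ∈ Icc (0:ℝ) (dLE A B), ρ ≤ Complex.abs (γ u) := fun u hu =>
    isMinOn_iff.1 hminOn u hu
  have huc := isCompact_Icc.uniformContinuousOn_of_continuous hcont
  obtain ⟨δ, hδ0, hδ⟩ := Metric.uniformContinuousOn_iff.1 huc (ρ / 4) (by positivity)
  have hchord : ∀ s₁ ∈ Icc (0:ℝ) (dLE A B), ∀ s₂ ∈ Icc (0:ℝ) (dLE A B), |s₂ - s₁| < δ →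
      Complex.abs ((γ s₂) ^ 2 - (γ s₁) ^ 2) = |s₂ - s₁| := by
    intro s₁ hs₁ s₂ hs₂ hlt
    have hdist := hδ s₁ hs₁ s₂ hs₂ (by rw [Real.dist_eq, abs_sub_comm]; exact hlt)
    rw [Complex.dist_eq] at hdist
    have hclose : Complex.abs (γ s₂ - γ s₁) < Complex.abs (γ s₁) / 4 := by
      rw [AbsoluteValue.map_sub]
      calc Complex.abs (γ s₁ - γ s₂) < ρ / 4 := hdist
        _ ≤ Complex.abs (γ s₁) / 4 := by linarith [hmin s₁ hs₁]
    have hle := dLE_le_of_close (hnz s₁ hs₁) hclose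
    have hge := dLE_ge (γ s₁) (γ s₂)
    have hgeod := h.2.2 s₁ hs₁ s₂ hs₂
    rw [hgeod, abs_sub_comm] at hle hge
    linarith
  have hglobal : ∀ s ∈ Icc (0:ℝ) (dLE A B), ∀ t ∈ Icc (0:ℝ) (dLE A B), s ≤ t →
      Complex.abs ((γ t) ^ 2 - (γ s) ^ 2) = t - s := by
    intro s hs t ht hst
    rcases eq_or_lt_of_le hst with rfl | hlt
    · simp
    · obtain ⟨N, hN⟩ := exists_nat_gt (2 * (t - s) / δ)
      have hN0 : (0:ℝ) < N := lt_of_le_of_lt (div_nonneg (by linarith) hδ0.le) hN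
      have hNn : (N:ℝ) ≠ 0 := hN0.ne'
      set step := (t - s) / N with hstepdef
      have hstep0 : 0 < step := div_pos (by linarith) hN0
      have h2step : 2 * step < δ := by
        have h1 := (div_lt_iff₀ hδ0).1 hN
        rw [hstepdef]
        rw [mul_div_assoc']
        rw [div_lt_iff₀ hN0]
        nlinarith
      set u : ℕ → ℝ := fun i => s + i * step with hudef
      have hu0 : u 0 = s := by simp [hudef]
      have hsN : s + N * step = t := by rw [hstepdef]; field_simp; ring
      have huN : u N = t := by rw [hudef]; exact hsN
      have humem : ∀ i : ℕ, i ≤ N → u i ∈ Icc (0:ℝ) (dLE A B) := by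
        intro i hi
        have h1 : 0 ≤ (i:ℝ) * step := by positivity
        have h2 : (i:ℝ) * step ≤ N * step := by
          apply mul_le_mul_of_nonneg_right _ hstep0.le
          exact_mod_cast hi
        constructor
        · have : (0:ℝ) ≤ s := hs.1
          show 0 ≤ s + i * step
          linarith
        · show s + i * step ≤ dLE A B
          have : s + (i:ℝ) * step ≤ t := by linarith
          linarith [ht.2]
      have hdiff1 : ∀ i : ℕ, u (i + 1) - u i = step := by
        intro i
        show (s + (i + 1 : ℕ) * step) - (s + i * step) = step
        push_cast
        ring
      have hdiff2 : ∀ i : ℕ, u (i + 2) - u i = 2 * step := by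
        intro i
        show (s + (i + 2 : ℕ) * step) - (s + i * step) = 2 * step
        push_cast
        ring
      set v : ℕ → ℂ := fun i => (γ (u (i + 1))) ^ 2 - (γ (u i)) ^ 2 with hvdef
      have hnv : ∀ i : ℕ, i + 1 ≤ N → Complex.abs (v i) = step := by
        intro i hi
        have hc := hchord (u i) (humem i (by omega)) (u (i + 1)) (humem (i + 1) hi)
          (by rw [hdiff1 i, _root_.abs_of_pos hstep0]; linarith)
        rw [hdiff1 i, _root_.abs_of_pos hstep0] at hc
        exact hc
      have hnv2 : ∀ i : ℕ, i + 2 ≤ N →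
          Complex.abs ((γ (u (i + 2))) ^ 2 - (γ (u i)) ^ 2) = 2 * step := by
        intro i hi
        have hc := hchord (u i) (humem i (by omega)) (u (i + 2)) (humem (i + 2) hi)
          (by rw [hdiff2 i, _root_.abs_of_pos (by linarith)]; linarith)
        rw [hdiff2 i, _root_.abs_of_pos (by linarith)] at hc
        exact hc
      have hveq : ∀ i : ℕ, i + 2 ≤ N → v (i + 1) = v i := by
        intro i hi
        apply eq_of_norm_add_eq
        · have hs1 : v (i + 1) + v i = (γ (u (i + 2))) ^ 2 - (γ (u i)) ^ 2 := by
            show ((γ (u (i + 1 + 1))) ^ 2 - (γ (u (i + 1))) ^ 2) +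
              ((γ (u (i + 1))) ^ 2 - (γ (u i)) ^ 2) = _
            have : i + 1 + 1 = i + 2 := by omega
            rw [this]
            ring
          rw [hs1]
          simp only [Complex.norm_eq_abs]
          rw [hnv2 i hi, hnv (i + 1) hi, hnv i (by omega)]
          ring
        · simp only [Complex.norm_eq_abs]
          rw [hnv (i + 1) hi, hnv i (by omega)]
        · intro h0
          have := hnv (i + 1) hi
          rw [h0, map_zero] at this
          linarith
      have hvall : ∀ i : ℕ, i < N → v i = v 0 := by
        intro i
        induction i with
        | zero => intro _; rfl
        | succ k ih =>
            intro hk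
            have h1 := hveq k (by omega)
            rw [h1]
            exact ih (by omega)
      have hsum : (γ t) ^ 2 - (γ s) ^ 2 = ∑ i ∈ Finset.range N, v i := by
        rw [← hu0, ← huN]
        exact (Finset.sum_range_sub (fun i => (γ (u i)) ^ 2) N).symm
      have hNpos : 0 < N := by exact_mod_cast hN0
      have hsum2 : ∑ i ∈ Finset.range N, v i = N • v 0 := by
        rw [Finset.sum_congr rfl (fun i hi => hvall i (Finset.mem_range.1 hi))]
        rw [Finset.sum_const, Finset.card_range]
      calc Complex.abs ((γ t) ^ 2 - (γ s) ^ 2) = Complex.abs (N • v 0) := by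
            rw [hsum, hsum2]
        _ = N * Complex.abs (v 0) := by
            rw [nsmul_eq_mul, map_mul, Complex.abs_natCast]
        _ = N * step := by rw [hnv 0 (by omega)]
        _ = t - s := by rw [hstepdef]; field_simp
  have he : Complex.abs (B ^ 2 - A ^ 2) = dLE A B := by
    have := hglobal 0 ⟨le_rfl, hd0.le⟩ (dLE A B) ⟨hd0.le, le_rfl⟩ hd0.le
    rw [h.1, h.2.1] at this
    simpa using this
  refine ⟨he, ?_⟩
  intro t ht
  have e1 : Complex.abs ((γ t) ^ 2 - A ^ 2) = t := by
    have := hglobal 0 ⟨le_rfl, hd0.le⟩ t ht ht.1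
    rw [h.1] at this
    simpa using this
  have e2 : Complex.abs (B ^ 2 - (γ t) ^ 2) = dLE A B - t := by
    have := hglobal t ht (dLE A B) ⟨hd0.le, le_rfl⟩ ht.2
    rw [h.2.1] at this
    exact this
  have hsumeq : (B ^ 2 - (γ t) ^ 2) + ((γ t) ^ 2 - A ^ 2) = B ^ 2 - A ^ 2 := by ring
  have htri : ‖(B ^ 2 - (γ t) ^ 2) + ((γ t) ^ 2 - A ^ 2)‖
      = ‖B ^ 2 - (γ t) ^ 2‖ + ‖(γ t) ^ 2 - A ^ 2‖ := by
    rw [hsumeq]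
    simp only [Complex.norm_eq_abs]
    rw [he, e2, e1]
    ring
  have hne : B ^ 2 - A ^ 2 ≠ 0 := by
    intro h0
    rw [h0, map_zero] at he
    linarith
  have hdec := sameRay_decomp htri (by rw [hsumeq]; exact hne)
  rw [hsumeq] at hdec
  rw [show ‖(γ t) ^ 2 - A ^ 2‖ = t from by rw [Complex.norm_eq_abs]; exact e1,
      show ‖B ^ 2 - A ^ 2‖ = dLE A B from by rw [Complex.norm_eq_abs]; exact he] at hdec
  rw [← hdec]
  ring

lemma mixed {A B : ℂ} {γ₁ γ₂ : ℝ → ℂ} (h₁ : IsLEGeodesic A B γ₁) (h₂ : IsLEGeodesic A B γ₂)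
    (hd : dLE A B ≠ 0) {t₀ : ℝ} (ht₀ : t₀ ∈ Icc (0:ℝ) (dLE A B)) (hz : γ₁ t₀ = 0)
    (hnz : ∀ t ∈ Icc (0:ℝ) (dLE A B), γ₂ t ≠ 0) : False := by
  have hd0 : 0 < dLE A B := lt_of_le_of_ne (dLE_nonneg A B) (Ne.symm hd)
  obtain ⟨he, hform⟩ := novertex h₂ hd hnz
  have e4 : t₀ = Complex.abs A ^ 2 := geo_zero_time h₁ ht₀ hz
  have e5 : dLE A B - t₀ = Complex.abs B ^ 2 := by
    have hds := h₁.2.2 t₀ ht₀ (dLE A B) ⟨dLE_nonneg A B, le_rfl⟩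
    rw [hz, h₁.2.1, dLE_zero_left, abs_sub_comm,
      _root_.abs_of_nonneg (by linarith [ht₀.2])] at hds
    exact hds.symm
  have hsumeq : B ^ 2 + (- A ^ 2) = B ^ 2 - A ^ 2 := by ring
  have htri : ‖B ^ 2 + (- A ^ 2)‖ = ‖B ^ 2‖ + ‖- A ^ 2‖ := by
    rw [hsumeq, norm_neg]
    simp only [Complex.norm_eq_abs]
    rw [he, map_pow, map_pow]
    rw [← e4, ← e5]
    ring
  have hne : B ^ 2 - A ^ 2 ≠ 0 := by
    intro h0
    rw [h0, map_zero] at he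
    linarith
  have hdec := sameRay_decomp htri (by rw [hsumeq]; exact hne)
  rw [hsumeq] at hdec
  rw [norm_neg] at hdec
  rw [show ‖A ^ 2‖ = t₀ from by rw [Complex.norm_eq_abs, map_pow, e4],
      show ‖B ^ 2 - A ^ 2‖ = dLE A B from by rw [Complex.norm_eq_abs, he]] at hdec
  have hval := hform t₀ ht₀
  rw [← hdec] at hval
  have hsq0 : (γ₂ t₀) ^ 2 = 0 := by rw [hval]; ring
  exact hnz t₀ ht₀ ((pow_eq_zero_iff two_ne_zero).1 hsq0)

/-- Uniqueness of geodesics in the log-euclidean plane. -/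
theorem dLE_geodesic_unique (A B : ℂ) (hAB : A ≠ B) (γ₁ γ₂ : ℝ → ℂ)
    (h₁ : IsLEGeodesic A B γ₁) (h₂ : IsLEGeodesic A B γ₂) :
    ∀ t ∈ Set.Icc (0:ℝ) (dLE A B), γ₁ t = γ₂ t := by
  intro t ht
  have hdne : dLE A B ≠ 0 := by
    intro h0
    apply hAB
    rw [← h₁.1, ← h₁.2.1, h0]
  have hd0 : 0 < dLE A B := lt_of_le_of_ne (dLE_nonneg A B) (Ne.symm hdne)
  by_cases hz₁ : ∃ t₁ ∈ Icc (0:ℝ) (dLE A B), γ₁ t₁ = 0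
  · by_cases hz₂ : ∃ t₂ ∈ Icc (0:ℝ) (dLE A B), γ₂ t₂ = 0
    · obtain ⟨t₁, ht₁, hzz1⟩ := hz₁
      obtain ⟨t₂, ht₂, hzz2⟩ := hz₂
      have he1 : t₁ = Complex.abs A ^ 2 := geo_zero_time h₁ ht₁ hzz1
      have he2 : t₂ = Complex.abs A ^ 2 := geo_zero_time h₂ ht₂ hzz2
      have ht12 : t₂ = t₁ := by rw [he1, he2]
      rw [ht12] at hzz2
      have huniq2 : ∀ u ∈ Icc (0:ℝ) (dLE A B), γ₂ u = 0 → u = t₁ := fun u hu hzu =>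
        (geo_zero_time h₂ hu hzu).trans he1.symm
      rcases lt_trichotomy t t₁ with hlt | heq | hgt
      · have hsub : Icc (0:ℝ) t ⊆ Icc (0:ℝ) (dLE A B) := Icc_subset_Icc le_rfl ht.2
        refine sqrt_unique_on (c := 0) ⟨le_rfl, ht.1⟩ ((geo_cont h₁).mono hsub)
          ((geo_cont h₂).mono hsub) ?_ ?_ ?_ t ⟨ht.1, le_rfl⟩
        · intro uu huu
          have huu' : uu ∈ Icc (0:ℝ) t₁ := ⟨huu.1, le_trans huu.2 hlt.le⟩
          rw [vertex_left h₁ ht₁ hzz1 huu', vertex_left h₂ ht₁ hzz2 huu']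
        · intro uu huu h0
          have := huniq2 uu (hsub huu) h0
          linarith [huu.2]
        · rw [h₁.1, h₂.1]
      · rw [heq, hzz1, hzz2]
      · have hsub : Icc t (dLE A B) ⊆ Icc (0:ℝ) (dLE A B) := Icc_subset_Icc ht.1 le_rfl
        refine sqrt_unique_on (c := dLE A B) ⟨ht.2, le_rfl⟩ ((geo_cont h₁).mono hsub)
          ((geo_cont h₂).mono hsub) ?_ ?_ ?_ t ⟨le_rfl, ht.2⟩
        · intro uu huu
          have huu' : uu ∈ Icc t₁ (dLE A B) := ⟨le_trans hgt.le huu.1, huu.2⟩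
          rw [vertex_right h₁ ht₁ hzz1 huu', vertex_right h₂ ht₁ hzz2 huu']
        · intro uu huu h0
          have := huniq2 uu (hsub huu) h0
          linarith [huu.1]
        · rw [h₁.2.1, h₂.2.1]
    · push_neg at hz₂
      obtain ⟨t₁, ht₁, hzz1⟩ := hz₁
      exact (mixed h₁ h₂ hdne ht₁ hzz1 hz₂).elim
  · by_cases hz₂ : ∃ t₂ ∈ Icc (0:ℝ) (dLE A B), γ₂ t₂ = 0
    · push_neg at hz₁
      obtain ⟨t₂, ht₂, hzz2⟩ := hz₂
      exact (mixed h₂ h₁ hdne ht₂ hzz2 hz₁).elim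
    · push_neg at hz₁ hz₂
      refine sqrt_unique_on (c := 0) ⟨le_rfl, hd0.le⟩ (geo_cont h₁) (geo_cont h₂)
        ?_ hz₂ ?_ t ht
      · intro uu huu
        rw [(novertex h₁ hdne hz₁).2 uu huu, (novertex h₂ hdne hz₂).2 uu huu]
      · rw [h₁.1, h₂.1]
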